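/- Let κ ≥ 0, let c = c_κ (with c = c₀ when κ = 0), define H and h as above with these parameters, and let ρ̂ be the unique solution of ρ = exp(H(ρ)) with ρ̂ > c/√(1 + κ). For ρ > 0 with h(ρ) ≠ 0, let J(ρ) be the 2×2 real matrix with rows (0, −1/h(ρ)) and (1 − h(ρ)·exp(H(ρ)), 0). Then: (i) h(1) = c² − κ > 0 and det J(1) = (1 − h(1)·exp(H(1)))/h(1) = ((1+κ) − c²)/(c² − κ) < 0, so J(1) has two nonzero real eigenvalues of opposite sign (a saddle); (ii) h(ρ̂) > 0 and 1 − h(ρ̂)·exp(H(ρ̂)) = (1+κ) − (c/ρ̂)² > 0, so det J(ρ̂) > 0 and trace J(ρ̂) = 0, i.e. the eigenvalues of J(ρ̂) are purely imaginary and nonzero (a center). -/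

import Mathlib

set_option maxHeartbeats 1000000

/-- `H(ρ) = (c²/2)·(1 − 1/ρ²) − κ·ln ρ`. -/
noncomputable def Hfun (κ c ρ : ℝ) : ℝ := c ^ 2 / 2 * (1 - 1 / ρ ^ 2) - κ * Real.log ρ

/-- `h(ρ) = c²/ρ³ − κ/ρ`. -/
noncomputable def hfun (κ c ρ : ℝ) : ℝ := c ^ 2 / ρ ^ 3 - κ / ρ

/-- Jacobian at `(ρ, 0)` of the planar vector field `(ρ, E) ↦ (−E/h(ρ), ρ − exp(H(ρ)))`:
rows `(0, −1/h(ρ))` and `(1 − h(ρ)·exp(H(ρ)), 0)`. -/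
noncomputable def Jmat (κ c ρ : ℝ) : Matrix (Fin 2) (Fin 2) ℝ :=
  !![0, -1 / hfun κ c ρ; 1 - hfun κ c ρ * Real.exp (Hfun κ c ρ), 0]


lemma pade {x : ℝ} (hx : 0 < x) : Real.log (1 + x) < x * (2 + x) / (2 * (1 + x)) := by
  set f : ℝ → ℝ := fun y => y * (2 + y) / (2 * (1 + y)) - Real.log (1 + y) with hf
  have hderiv : ∀ y : ℝ, 0 < 1 + y → HasDerivAt f (y ^ 2 / (2 * (1 + y) ^ 2)) y := by
    intro y hy
    have hA : HasDerivAt (fun y : ℝ => y * (2 + y)) (1 * (2 + y) + y * (0 + 1)) y :=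
      (hasDerivAt_id y).mul ((hasDerivAt_const y 2).add (hasDerivAt_id y))
    have hB : HasDerivAt (fun y : ℝ => 2 * (1 + y)) (2 * (0 + 1)) y :=
      ((hasDerivAt_const y 1).add (hasDerivAt_id y)).const_mul 2
    have hAB := hA.div hB (by positivity)
    have hlog : HasDerivAt (fun y : ℝ => Real.log (1 + y)) ((0 + 1) / (1 + y)) y :=
      ((hasDerivAt_const y 1).add (hasDerivAt_id y)).log (ne_of_gt hy)
    have := hAB.sub hlog
    refine this.congr_deriv ?_
    field_simp
    ring
  have hmono : StrictMonoOn f (Set.Ici 0) := by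
    apply strictMonoOn_of_deriv_pos (convex_Ici 0)
    · intro y hy
      exact (hderiv y (by simp at hy; linarith)).continuousAt.continuousWithinAt
    · intro y hy
      rw [interior_Ici] at hy
      simp only [Set.mem_Ioi] at hy
      rw [(hderiv y (by linarith)).deriv]
      positivity
  have h0 : f 0 = 0 := by simp [hf]
  have := hmono (Set.self_mem_Ici) (Set.mem_Ici.2 hx.le) hx
  rw [h0] at this
  simp only [hf] at this
  linarith

lemma phi_key (s c : ℝ) (hs : 0 < s) (hc : Real.sqrt (1 + s ^ 2) < c)
    (heq : s ^ 2 * Real.log c + Real.log ((c - s) ^ 2 + 1) - (c ^ 2 - s ^ 2) / 2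
      = s ^ 2 / 2 * Real.log (s ^ 2)) :
    c * s < 1 + s ^ 2 := by
  have hsq : Real.sqrt (1 + s ^ 2) ^ 2 = 1 + s ^ 2 := Real.sq_sqrt (by positivity)
  have hsqpos : 0 < Real.sqrt (1 + s ^ 2) := Real.sqrt_pos.2 (by positivity)
  have hsqge1 : 1 ≤ Real.sqrt (1 + s ^ 2) := by
    nlinarith [Real.sqrt_nonneg (1 + s ^ 2)]
  have hssqrt : s < Real.sqrt (1 + s ^ 2) := by
    nlinarith [Real.sqrt_nonneg (1 + s ^ 2)]
  have hcpos : 0 < c := lt_trans hsqpos hc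
  obtain ⟨φ, hφ⟩ : ∃ φ : ℝ → ℝ, φ = fun z =>
      s ^ 2 * Real.log z + Real.log ((z - s) ^ 2 + 1) - (z ^ 2 - s ^ 2) / 2 := ⟨_, rfl⟩
  have hφd : ∀ z : ℝ, 0 < z →
      HasDerivAt φ (s ^ 2 / z + 2 * (z - s) / ((z - s) ^ 2 + 1) - z) z := by
    intro z hz
    rw [hφ]
    have h1 : HasDerivAt (fun z : ℝ => s ^ 2 * Real.log z) (s ^ 2 * z⁻¹) z :=
      (Real.hasDerivAt_log hz.ne').const_mul (s ^ 2)
    have hin : HasDerivAt (fun z : ℝ => (z - s) ^ 2 + 1) (2 * (z - s) ^ 1 * 1) z :=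
      (((hasDerivAt_id z).sub_const s).pow 2).add_const 1
    have h2 : HasDerivAt (fun z : ℝ => Real.log ((z - s) ^ 2 + 1))
        ((2 * (z - s) ^ 1 * 1) / ((z - s) ^ 2 + 1)) z := hin.log (by positivity)
    have h3 : HasDerivAt (fun z : ℝ => (z ^ 2 - s ^ 2) / 2) (2 * z ^ 1 / 2) z :=
      ((hasDerivAt_pow 2 z).sub_const (s ^ 2)).div_const 2
    have := (h1.add h2).sub h3
    refine this.congr_deriv ?_
    have hd : (0:ℝ) < (z - s) ^ 2 + 1 := by positivity
    field_simp
    try ring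
  have hanti : StrictAntiOn φ (Set.Ici (Real.sqrt (1 + s ^ 2))) := by
    apply strictAntiOn_of_deriv_neg (convex_Ici _)
    · intro z hz
      have hz0 : 0 < z := lt_of_lt_of_le hsqpos hz
      exact (hφd z hz0).continuousAt.continuousWithinAt
    · intro z hz
      rw [interior_Ici] at hz
      simp only [Set.mem_Ioi] at hz
      have hz0 : 0 < z := lt_trans hsqpos hz
      have hz2 : 1 + s ^ 2 < z ^ 2 := by nlinarith [Real.sqrt_nonneg (1 + s ^ 2)]
      have hzs : s < z := lt_trans hssqrt hz
      rw [(hφd z hz0).deriv]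
      have hden : (0:ℝ) < (z - s) ^ 2 + 1 := by positivity
      have key : s ^ 2 / z + 2 * (z - s) / ((z - s) ^ 2 + 1) - z
          = (z - s) ^ 2 * (1 + s ^ 2 - z ^ 2) / (z * ((z - s) ^ 2 + 1)) := by
        field_simp
        ring
      rw [key]
      apply div_neg_of_neg_of_pos
      · apply mul_neg_of_pos_of_neg
        · exact pow_pos (sub_pos.2 hzs) 2
        · linarith
      · positivity
  -- value at z₀ = (1+s²)/s
  obtain ⟨z₀, hz₀⟩ : ∃ z₀ : ℝ, z₀ = (1 + s ^ 2) / s := ⟨_, rfl⟩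
  have hz₀pos : 0 < z₀ := by rw [hz₀]; positivity
  have hz₀mem : Real.sqrt (1 + s ^ 2) ≤ z₀ := by
    rw [hz₀, le_div_iff₀ hs]
    nlinarith [Real.sqrt_nonneg (1 + s ^ 2)]
  have hlogs2 : Real.log (s ^ 2) = 2 * Real.log s := by
    rw [Real.log_pow]; push_cast; ring
  have hφz₀ : φ z₀ < s ^ 2 / 2 * Real.log (s ^ 2) := by
    have ezs : z₀ - s = 1 / s := by
      rw [hz₀]; field_simp; ring
    have e1 : (z₀ - s) ^ 2 + 1 = (1 + s ^ 2) / s ^ 2 := by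
      rw [ezs]; field_simp
      try ring
    have e2 : z₀ ^ 2 = (1 + s ^ 2) ^ 2 / s ^ 2 := by
      rw [hz₀, div_pow]
    have l1 : Real.log z₀ = Real.log (1 + s ^ 2) - Real.log s := by
      rw [hz₀]; exact Real.log_div (by positivity) hs.ne'
    have l2 : Real.log ((z₀ - s) ^ 2 + 1) = Real.log (1 + s ^ 2) - 2 * Real.log s := by
      rw [e1, Real.log_div (by positivity) (by positivity), hlogs2]
    have hpade := pade (x := 1 / s ^ 2) (by positivity)
    have l3 : Real.log (1 + 1 / s ^ 2) = Real.log (1 + s ^ 2) - 2 * Real.log s := by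
      have : 1 + 1 / s ^ 2 = (1 + s ^ 2) / s ^ 2 := by field_simp; ring
      rw [this, Real.log_div (by positivity) (by positivity), hlogs2]
    have l4 : (1 / s ^ 2) * (2 + 1 / s ^ 2) / (2 * (1 + 1 / s ^ 2))
        = (1 + 2 * s ^ 2) / (2 * s ^ 2 * (s ^ 2 + 1)) := by
      field_simp
      ring
    rw [l3, l4] at hpade
    have key : (s ^ 2 + 1) * (Real.log (1 + s ^ 2) - 2 * Real.log s)
        < (1 + 2 * s ^ 2) / (2 * s ^ 2) := by
      have h2 : (0:ℝ) < s ^ 2 + 1 := by positivity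
      have := mul_lt_mul_of_pos_left hpade h2
      have e : (s ^ 2 + 1) * ((1 + 2 * s ^ 2) / (2 * s ^ 2 * (s ^ 2 + 1)))
          = (1 + 2 * s ^ 2) / (2 * s ^ 2) := by
        field_simp
      linarith [e ▸ this]
    have e3 : (z₀ ^ 2 - s ^ 2) / 2 = (1 + 2 * s ^ 2) / (2 * s ^ 2) := by
      rw [e2]; field_simp; ring
    rw [hφ]
    simp only [l1, l2, e3, hlogs2]
    nlinarith []
  -- conclude
  by_contra hcon
  push_neg at hcon
  have hz₀c : z₀ ≤ c := by
    rw [hz₀, div_le_iff₀ hs]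
    nlinarith
  have hcmem : c ∈ Set.Ici (Real.sqrt (1 + s ^ 2)) := le_of_lt hc
  have hφc : φ c = s ^ 2 / 2 * Real.log (s ^ 2) := by rw [hφ]; exact heq
  rcases eq_or_lt_of_le hz₀c with h | h
  · rw [← h] at hφc
    linarith
  · have h2 := hanti (Set.mem_Ici.2 hz₀mem) hcmem h
    rw [hφc] at h2
    linarith

lemma rho_key (κ c ρhat : ℝ) (hκ : 0 < κ) (hc : Real.sqrt (1 + κ) < c)
    (heq : κ * Real.log c + Real.log ((c - Real.sqrt κ) ^ 2 + 1) - (c ^ 2 - κ) / 2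
      = κ / 2 * Real.log κ)
    (hρ1 : c / Real.sqrt (1 + κ) < ρhat) (hρ2 : Real.log ρhat = Hfun κ c ρhat) :
    κ * ρhat ^ 2 < c ^ 2 := by
  obtain ⟨s, hs, hs2⟩ : ∃ s : ℝ, 0 < s ∧ s ^ 2 = κ :=
    ⟨Real.sqrt κ, Real.sqrt_pos.2 hκ, Real.sq_sqrt hκ.le⟩
  have hss : Real.sqrt κ = s := by
    rw [← hs2, Real.sqrt_sq hs.le]
  have h1κ : (0:ℝ) < 1 + κ := by linarith
  have hsq1 : Real.sqrt (1 + κ) ^ 2 = 1 + κ := Real.sq_sqrt h1κ.le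
  have hsq1pos : 0 < Real.sqrt (1 + κ) := Real.sqrt_pos.2 h1κ
  have hcpos : 0 < c := by
    have : (1:ℝ) ≤ Real.sqrt (1 + κ) := by nlinarith [Real.sqrt_nonneg (1 + κ)]
    linarith
  -- c·s < 1 + κ
  have hcs : c * s < 1 + κ := by
    have := phi_key s c hs (by rw [hs2]; exact hc)
      (by rw [hs2, ← hss]; exact heq)
    rwa [hs2] at this
  have hsc : s < c := by
    have : s < Real.sqrt (1 + κ) := by
      nlinarith [Real.sqrt_nonneg (1 + κ)]
    linarith
  -- G strictly decreasing
  obtain ⟨G, hG⟩ : ∃ G : ℝ → ℝ, G = fun ρ => Hfun κ c ρ - Real.log ρ := ⟨_, rfl⟩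
  have hGd : ∀ ρ : ℝ, 0 < ρ →
      HasDerivAt G (c ^ 2 / ρ ^ 3 - (κ + 1) / ρ) ρ := by
    intro ρ hρ
    rw [hG]
    have hi : HasDerivAt (fun ρ : ℝ => 1 / ρ ^ 2)
        ((0 * ρ ^ 2 - 1 * (2 * ρ ^ 1)) / (ρ ^ 2) ^ 2) ρ :=
      (hasDerivAt_const ρ 1).div (hasDerivAt_pow 2 ρ) (by positivity)
    have h1 : HasDerivAt (fun ρ : ℝ => c ^ 2 / 2 * (1 - 1 / ρ ^ 2))
        (c ^ 2 / 2 * (-((0 * ρ ^ 2 - 1 * (2 * ρ ^ 1)) / (ρ ^ 2) ^ 2))) ρ :=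
      (hi.const_sub 1).const_mul (c ^ 2 / 2)
    have h2 : HasDerivAt (fun ρ : ℝ => κ * Real.log ρ) (κ * ρ⁻¹) ρ :=
      (Real.hasDerivAt_log hρ.ne').const_mul κ
    have h3 : HasDerivAt (fun ρ : ℝ => Real.log ρ) ρ⁻¹ ρ := Real.hasDerivAt_log hρ.ne'
    have := (h1.sub h2).sub h3
    refine this.congr_deriv ?_
    field_simp
    ring
  have hanti : StrictAntiOn G (Set.Ici (c / Real.sqrt (1 + κ))) := by
    apply strictAntiOn_of_deriv_neg (convex_Ici _)
    · intro ρ hρ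
      have : 0 < ρ := lt_of_lt_of_le (by positivity) hρ
      exact (hGd ρ this).continuousAt.continuousWithinAt
    · intro ρ hρ
      rw [interior_Ici] at hρ
      simp only [Set.mem_Ioi] at hρ
      have hρ0 : 0 < ρ := lt_trans (by positivity) hρ
      have hc2 : c ^ 2 < (1 + κ) * ρ ^ 2 := by
        have h1 : c < ρ * Real.sqrt (1 + κ) := by
          rw [div_lt_iff₀ hsq1pos] at hρ
          linarith
        nlinarith [Real.sqrt_nonneg (1 + κ)]
      rw [(hGd ρ hρ0).deriv]
      have e : c ^ 2 / ρ ^ 3 - (κ + 1) / ρ = (c ^ 2 - (κ + 1) * ρ ^ 2) / ρ ^ 3 := by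
        field_simp
      rw [e]
      apply div_neg_of_neg_of_pos (by linarith) (by positivity)
  -- G (c/s) < 0
  have hρ₀pos : 0 < c / s := by positivity
  have hA : (0:ℝ) < (c - s) ^ 2 + 1 := by positivity
  have hGρ₀ : G (c / s) < 0 := by
    have hAs : (c - s) ^ 2 + 1 < c / s := by
      rw [lt_div_iff₀ hs]
      nlinarith [mul_pos (sub_pos.2 hsc) (sub_pos.2 (show s * (c - s) < 1 by nlinarith))]
    have hlogA : Real.log ((c - s) ^ 2 + 1) < Real.log c - Real.log s := by
      rw [← Real.log_div hcpos.ne' hs.ne']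
      exact Real.log_lt_log hA hAs
    have l0 : Real.log (c / s) = Real.log c - Real.log s :=
      Real.log_div hcpos.ne' hs.ne'
    have lκ : Real.log κ = 2 * Real.log s := by
      rw [← hs2, Real.log_pow]; push_cast; ring
    have e1 : (1:ℝ) / (c / s) ^ 2 = κ / c ^ 2 := by
      rw [← hs2]; field_simp
    have e2 : c ^ 2 / 2 * (1 - κ / c ^ 2) = (c ^ 2 - κ) / 2 := by
      field_simp
    rw [hG]
    simp only [Hfun, e1, l0, e2]
    rw [hss] at heq
    rw [lκ] at heq
    ring_nf at heq hlogA ⊢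
    linarith
  -- conclude
  have hρs : ρhat < c / s := by
    by_contra hcon
    push_neg at hcon
    have hmem : c / s ∈ Set.Ici (c / Real.sqrt (1 + κ)) := by
      simp only [Set.mem_Ici]
      apply div_le_div_of_nonneg_left hcpos.le hs
      · rw [← hss]
        nlinarith [Real.sqrt_nonneg κ, Real.sq_sqrt hκ.le, Real.sq_sqrt h1κ.le,
          Real.sqrt_nonneg (1 + κ)]
    have hG0 : G ρhat = 0 := by rw [hG]; simp only; linarith [hρ2]
    rcases eq_or_lt_of_le hcon with h | h
    · rw [h] at hGρ₀
      linarith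
    · have := hanti hmem (Set.mem_Ici.2 hρ1.le) h
      linarith
  have hρpos : 0 < ρhat := lt_trans (by positivity) hρ1
  have h4 : s * ρhat < c := by
    have := mul_lt_mul_of_pos_left hρs hs
    rwa [mul_div_cancel₀ c hs.ne'] at this
  nlinarith [mul_pos hs hρpos]

/-- saddle at `(1,0)` and center at `(ρ̂,0)`. -/
theorem stmt8 (κ c ρhat : ℝ) (hκ : 0 ≤ κ)
    (hc0 : κ = 0 → 1 < c ∧ c ^ 2 + 1 = Real.exp (c ^ 2 / 2))
    (hck : 0 < κ → Real.sqrt (1 + κ) < c ∧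
      c ^ κ * ((c - Real.sqrt κ) ^ 2 + 1) = Real.exp ((c ^ 2 - κ) / 2) * κ ^ (κ / 2))
    (hρ1 : c / Real.sqrt (1 + κ) < ρhat) (hρ2 : ρhat = Real.exp (Hfun κ c ρhat)) :
    -- (i) saddle at (1,0)
    (hfun κ c 1 = c ^ 2 - κ ∧ 0 < hfun κ c 1 ∧
      (Jmat κ c 1).det = ((1 + κ) - c ^ 2) / (c ^ 2 - κ) ∧ (Jmat κ c 1).det < 0 ∧
      ∃ lam : ℝ, 0 < lam ∧ ∀ z : ℝ,
        (Jmat κ c 1 - z • (1 : Matrix (Fin 2) (Fin 2) ℝ)).det = 0 ↔ z = lam ∨ z = -lam) ∧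
    -- (ii) center at (ρ̂,0)
    (0 < hfun κ c ρhat ∧
      1 - hfun κ c ρhat * Real.exp (Hfun κ c ρhat) = (1 + κ) - (c / ρhat) ^ 2 ∧
      0 < 1 - hfun κ c ρhat * Real.exp (Hfun κ c ρhat) ∧
      0 < (Jmat κ c ρhat).det ∧ (Jmat κ c ρhat).trace = 0 ∧
      ∃ μ : ℝ, μ ≠ 0 ∧ ∀ z : ℂ,
        ((Jmat κ c ρhat).map (fun x : ℝ => (x : ℂ))
            - z • (1 : Matrix (Fin 2) (Fin 2) ℂ)).det = 0 ↔
          z = μ * Complex.I ∨ z = -(μ * Complex.I)) := by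
  have h1κ : (0:ℝ) < 1 + κ := by linarith
  have hsq1 : Real.sqrt (1 + κ) ^ 2 = 1 + κ := Real.sq_sqrt h1κ.le
  have hsq1pos : 0 < Real.sqrt (1 + κ) := Real.sqrt_pos.2 h1κ
  have hc2 : 1 + κ < c ^ 2 := by
    rcases eq_or_lt_of_le hκ with h0 | hpos
    · obtain ⟨h1c, _⟩ := hc0 h0.symm
      nlinarith
    · obtain ⟨hsc, _⟩ := hck hpos
      nlinarith [Real.sqrt_nonneg (1 + κ)]
  have hcpos : 0 < c := by
    rcases eq_or_lt_of_le hκ with h0 | hpos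
    · linarith [(hc0 h0.symm).1]
    · linarith [(hck hpos).1, hsq1pos]
  have hρpos : 0 < ρhat := lt_trans (div_pos hcpos hsq1pos) hρ1
  have hlogρ : Real.log ρhat = Hfun κ c ρhat := by
    have := congrArg Real.log hρ2
    rwa [Real.log_exp] at this
  -- key: κ ρ̂² < c²
  have hkey : κ * ρhat ^ 2 < c ^ 2 := by
    rcases eq_or_lt_of_le hκ with h0 | hpos
    · rw [← h0]
      nlinarith
    · obtain ⟨hsc, heq⟩ := hck hpos
      have hl := congrArg Real.log heq
      have hA : (0:ℝ) < (c - Real.sqrt κ) ^ 2 + 1 := by positivity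
      rw [Real.log_mul (Real.rpow_pos_of_pos hcpos κ).ne' hA.ne',
        Real.log_mul (Real.exp_pos _).ne' (Real.rpow_pos_of_pos hpos _).ne',
        Real.log_rpow hcpos, Real.log_exp, Real.log_rpow hpos] at hl
      exact rho_key κ c ρhat hpos hsc (by linarith) hρ1 hlogρ
  have hκc2 : κ < c ^ 2 := by linarith
  have hH1 : Hfun κ c 1 = 0 := by simp [Hfun]
  have hh1 : hfun κ c 1 = c ^ 2 - κ := by simp [hfun]
  have hh1pos : 0 < hfun κ c 1 := by rw [hh1]; linarith
  have hE : Real.exp (Hfun κ c ρhat) = ρhat := hρ2.symm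
  have hhρpos : 0 < hfun κ c ρhat := by
    have e : hfun κ c ρhat = (c ^ 2 - κ * ρhat ^ 2) / ρhat ^ 3 := by
      unfold hfun; field_simp
    rw [e]
    exact div_pos (by linarith) (by positivity)
  have heq2 : 1 - hfun κ c ρhat * Real.exp (Hfun κ c ρhat) = (1 + κ) - (c / ρhat) ^ 2 := by
    rw [hE]; unfold hfun; field_simp; ring
  have hc2ρ : c ^ 2 < (1 + κ) * ρhat ^ 2 := by
    have h1 : c < ρhat * Real.sqrt (1 + κ) := by
      rw [div_lt_iff₀ hsq1pos] at hρ1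
      linarith
    nlinarith [Real.sqrt_nonneg (1 + κ)]
  have hpos2 : 0 < 1 - hfun κ c ρhat * Real.exp (Hfun κ c ρhat) := by
    rw [heq2, sub_pos, div_pow, div_lt_iff₀ (pow_pos hρpos 2)]
    linarith
  have hdet : ∀ ρ : ℝ, (Jmat κ c ρ).det
      = (1 - hfun κ c ρ * Real.exp (Hfun κ c ρ)) / hfun κ c ρ := by
    intro ρ
    rw [Jmat, Matrix.det_fin_two_of]
    ring
  have hdet1 : (Jmat κ c 1).det = ((1 + κ) - c ^ 2) / (c ^ 2 - κ) := by
    rw [hdet 1, hh1, hH1, Real.exp_zero]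
    ring_nf
  refine ⟨⟨hh1, hh1pos, hdet1, ?_, ?_⟩, hhρpos, heq2, hpos2, ?_, ?_, ?_⟩
  · rw [hdet1]
    exact div_neg_of_neg_of_pos (by linarith) (by linarith)
  · -- real eigenvalues at 1
    set lam := Real.sqrt ((c ^ 2 - (1 + κ)) / (c ^ 2 - κ)) with hlam
    have hargpos : 0 < (c ^ 2 - (1 + κ)) / (c ^ 2 - κ) :=
      div_pos (by linarith) (by linarith)
    have hlampos : 0 < lam := Real.sqrt_pos.2 hargpos
    have hlamsq : lam ^ 2 = (c ^ 2 - (1 + κ)) / (c ^ 2 - κ) := Real.sq_sqrt hargpos.le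
    refine ⟨lam, hlampos, fun z => ?_⟩
    have hdz : (Jmat κ c 1 - z • (1 : Matrix (Fin 2) (Fin 2) ℝ)).det = z ^ 2 - lam ^ 2 := by
      rw [Matrix.det_fin_two]
      simp [Jmat, Matrix.sub_apply, Matrix.smul_apply, Matrix.one_apply, hh1, hH1,
        Real.exp_zero, hlamsq]
      field_simp
      ring
    rw [hdz]
    constructor
    · intro h
      have h2 : (z - lam) * (z + lam) = 0 := by linear_combination h
      rcases mul_eq_zero.1 h2 with h3 | h3
      · exact Or.inl (by linarith)
      · exact Or.inr (by linarith)
    · rintro (rfl | rfl) <;> ring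
  · rw [hdet ρhat]
    exact div_pos hpos2 hhρpos
  · rw [Jmat, Matrix.trace_fin_two_of]
    ring
  · -- complex eigenvalues at ρ̂
    set μ := Real.sqrt ((1 - hfun κ c ρhat * Real.exp (Hfun κ c ρhat)) / hfun κ c ρhat)
      with hμ
    have hargpos : 0 < (1 - hfun κ c ρhat * Real.exp (Hfun κ c ρhat)) / hfun κ c ρhat :=
      div_pos hpos2 hhρpos
    have hμpos : 0 < μ := Real.sqrt_pos.2 hargpos
    have hμsq : μ ^ 2 = (1 - hfun κ c ρhat * Real.exp (Hfun κ c ρhat)) / hfun κ c ρhat :=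
      Real.sq_sqrt hargpos.le
    refine ⟨μ, hμpos.ne', fun z => ?_⟩
    have hreal : (-1 / hfun κ c ρhat) * (1 - hfun κ c ρhat * Real.exp (Hfun κ c ρhat))
        = -(μ ^ 2) := by
      rw [hμsq]
      field_simp
    have hcast : ((-1 / hfun κ c ρhat : ℝ) : ℂ)
          * ((1 - hfun κ c ρhat * Real.exp (Hfun κ c ρhat) : ℝ) : ℂ)
        = -((μ : ℂ)) ^ 2 := by
      rw [← Complex.ofReal_mul, hreal]
      push_cast
      ring
    have hmap : (Jmat κ c ρhat).map (fun x : ℝ => (x : ℂ))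
          - z • (1 : Matrix (Fin 2) (Fin 2) ℂ)
        = !![ -z, ((-1 / hfun κ c ρhat : ℝ) : ℂ);
              ((1 - hfun κ c ρhat * Real.exp (Hfun κ c ρhat) : ℝ) : ℂ), -z] := by
      rw [Jmat]
      ext i j
      fin_cases i <;> fin_cases j <;>
        simp [Matrix.one_fin_two]
    have hdz : ((Jmat κ c ρhat).map (fun x : ℝ => (x : ℂ))
          - z • (1 : Matrix (Fin 2) (Fin 2) ℂ)).det = z ^ 2 + (μ : ℂ) ^ 2 := by
      rw [hmap, Matrix.det_fin_two_of]
      linear_combination -hcast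
    rw [hdz]
    constructor
    · intro h
      have h2 : (z - (μ : ℂ) * Complex.I) * (z + (μ : ℂ) * Complex.I) = 0 := by
        linear_combination h - ((μ : ℝ) : ℂ) ^ 2 * Complex.I_sq
      rcases mul_eq_zero.1 h2 with h3 | h3
      · exact Or.inl (by linear_combination h3)
      · exact Or.inr (by linear_combination h3)
    · rintro (rfl | rfl) <;>
        push_cast <;>
        linear_combination ((μ : ℝ) : ℂ) ^ 2 * Complex.I_sq
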